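/- Suppose the angular velocity Ω(t) ≡ 0, the attitude satisfies Ṙ = R[Ω]_× so R(t) ≡ R₀ is constant, |(R₀)₃₃| ≥ ρ > 0, v_max > 0 bounds |v(t)|, m ∈ S² is not collinear with e₃, and 0 < ε < g²ρ²/(2 v_max²). Then for all x, y ∈ R^3 and all t: |m × x|² + g²|[R₀e₃]_×[e₃]_× x|² - ε v_max²(x₁² + x₂²) + y₁² + y₂² + (ε/(1+ε))((R₀ᵀ e₃)ᵀ y)² ≥ μ(|x|² + |y|²) with μ := min( g²ρ²/2 - ε v_max², (m₁²+m₂²)g²ρ²/(2m₃²+g²ρ²), ερ²/(3(1+ε)) ) > 0. -/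

import Mathlib

open Matrix

/-- The skew-symmetric cross-product matrix of `u ∈ ℝ³`. -/
def skew (u : Fin 3 → ℝ) : Matrix (Fin 3) (Fin 3) ℝ :=
  !![0, -u 2, u 1; u 2, 0, -u 0; -u 1, u 0, 0]

/-- The third standard basis vector of `ℝ³`. -/
def e3 : Fin 3 → ℝ := ![0, 0, 1]

/-- Sum of squares of the components of a vector in `ℝ³` (the squared Euclidean norm). -/
def sq3 (u : Fin 3 → ℝ) : ℝ := u 0 ^ 2 + u 1 ^ 2 + u 2 ^ 2

/-!
The form splits into an `x`-part and a `y`-part. On the `x`-side, `[R₀e₃]_×[e₃]_× x` has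
squared norm at least `(R₀)₃₃² (x₁² + x₂²) ≥ ρ² (x₁² + x₂²)`; half of this pays for the
`-ε v_max² (x₁² + x₂²)` term, and the other half together with `|m × x|²` controls `x₃²`
because `m` is not vertical. On the `y`-side, `R₀ᵀe₃` is a unit vector with vertical
component at least `ρ`, so `((R₀ᵀe₃)ᵀ y)²` controls `y₃²` up to horizontal terms.
-/

lemma sq3_eq_dotProduct (u : Fin 3 → ℝ) : sq3 u = u ⬝ᵥ u := by
  simp only [sq3, dotProduct, Fin.sum_univ_three, sq]

lemma sq3_e3 : sq3 e3 = 1 := by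
  simp [sq3, e3]

lemma mulVec_e3_apply (A : Matrix (Fin 3) (Fin 3) ℝ) (i : Fin 3) : (A *ᵥ e3) i = A i 2 := by
  simp [mulVec, dotProduct, e3, Fin.sum_univ_three]

lemma sq3_mulVec_of_transpose_mul_self {A : Matrix (Fin 3) (Fin 3) ℝ} (hA : Aᵀ * A = 1)
    (u : Fin 3 → ℝ) : sq3 (A *ᵥ u) = sq3 u := by
  rw [sq3_eq_dotProduct, sq3_eq_dotProduct, dotProduct_mulVec, ← vecMul_transpose,
    vecMul_vecMul, hA, vecMul_one]

lemma skew_mulVec (u w : Fin 3 → ℝ) : skew u *ᵥ w = u ⨯₃ w := by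
  ext i
  fin_cases i <;>
    simp [skew, mulVec, dotProduct, Fin.sum_univ_three, cross_apply] <;> ring

lemma sq_two_mul_le_sq3_skew_mul_skew_e3_mulVec (q x : Fin 3 → ℝ) :
    q 2 ^ 2 * (x 0 ^ 2 + x 1 ^ 2) ≤ sq3 ((skew q * skew e3) *ᵥ x) := by
  have h : sq3 ((skew q * skew e3) *ᵥ x)
      = q 2 ^ 2 * (x 0 ^ 2 + x 1 ^ 2) + (q 0 * x 0 + q 1 * x 1) ^ 2 := by
    rw [← mulVec_mulVec, skew_mulVec, skew_mulVec]
    simp [sq3, e3, cross_apply]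
    ring
  rw [h]
  exact le_add_of_nonneg_right (sq_nonneg _)

/-- Since `m₂ x₃ = (m × x)₁ + m₃ x₂` and `m₁ x₃ = m₃ x₁ - (m × x)₂`, this is Young's inequality
with weight `2m₃²/c`. -/
lemma mul_sq_two_le_sq3_cross_add {c : ℝ} (hc : 0 < c) (m x : Fin 3 → ℝ) :
    (m 0 ^ 2 + m 1 ^ 2) * c / (2 * m 2 ^ 2 + c) * x 2 ^ 2
      ≤ sq3 (m ⨯₃ x) + c / 2 * (x 0 ^ 2 + x 1 ^ 2) := by
  have hden : 0 < 2 * m 2 ^ 2 + c := by positivity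
  rw [div_mul_eq_mul_div, div_le_iff₀ hden]
  simp only [sq3, cross_apply, cons_val_zero, cons_val_one, cons_val_two, head_cons, tail_cons]
  nlinarith [sq_nonneg (2 * m 2 * (m 1 * x 2 - m 2 * x 1) - c * x 1),
    sq_nonneg (2 * m 2 * (m 2 * x 0 - m 0 * x 2) + c * x 0),
    mul_nonneg hden.le (sq_nonneg (m 0 * x 1 - m 1 * x 0))]

lemma mul_sq3_le_sq_add_sq_add_mul_sq_dotProduct {ε ρ : ℝ} (hε : 0 ≤ ε) {p : Fin 3 → ℝ}
    (hp : sq3 p = 1) (hρ : ρ ^ 2 ≤ p 2 ^ 2) (y : Fin 3 → ℝ) :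
    ε * ρ ^ 2 / (3 * (1 + ε)) * sq3 y
      ≤ y 0 ^ 2 + y 1 ^ 2 + ε / (1 + ε) * (p 0 * y 0 + p 1 * y 1 + p 2 * y 2) ^ 2 := by
  simp only [sq3] at hp ⊢
  set a := p 2 * y 2
  set b := p 0 * y 0 + p 1 * y 1
  have hρ1 : ρ ^ 2 ≤ 1 := by nlinarith [sq_nonneg (p 0), sq_nonneg (p 1)]
  have hb : b ^ 2 ≤ y 0 ^ 2 + y 1 ^ 2 := by
    nlinarith [sq_nonneg (p 0 * y 1 - p 1 * y 0), sq_nonneg (p 2), sq_nonneg (y 0), sq_nonneg (y 1)]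
  have ha : ρ ^ 2 * y 2 ^ 2 ≤ a ^ 2 := by
    rw [mul_pow]; exact mul_le_mul_of_nonneg_right hρ (sq_nonneg _)
  have hab : a ^ 2 / 3 - b ^ 2 / 2 ≤ (b + a) ^ 2 := by nlinarith [sq_nonneg (2 * a + 3 * b)]
  have hkey : ε * ρ ^ 2 / 3 * (y 0 ^ 2 + y 1 ^ 2 + y 2 ^ 2)
      ≤ (1 + ε) * (y 0 ^ 2 + y 1 ^ 2) + ε * (b + a) ^ 2 := by
    nlinarith [mul_le_mul_of_nonneg_left hab hε, mul_le_mul_of_nonneg_left hb hε,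
      mul_le_mul_of_nonneg_left ha hε, mul_le_mul_of_nonneg_left hρ1 hε,
      mul_nonneg hε (sq_nonneg (y 0)), mul_nonneg hε (sq_nonneg (y 1))]
  have h1ε : 0 < 1 + ε := by linarith
  rw [div_mul_eq_mul_div, div_le_iff₀ (by positivity)]
  calc ε * ρ ^ 2 * (y 0 ^ 2 + y 1 ^ 2 + y 2 ^ 2)
      ≤ 3 * ((1 + ε) * (y 0 ^ 2 + y 1 ^ 2) + ε * (b + a) ^ 2) := by linarith
    _ = (y 0 ^ 2 + y 1 ^ 2 + ε / (1 + ε) * (b + a) ^ 2) * (3 * (1 + ε)) := by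
      field_simp

lemma min_min_mul_add_add_le {a b c s t u : ℝ} (hs : 0 ≤ s) (ht : 0 ≤ t) (hu : 0 ≤ u) :
    min (min a b) c * (s + t + u) ≤ a * s + b * t + c * u := by
  have ha := mul_le_mul_of_nonneg_right ((min_le_left (min a b) c).trans (min_le_left a b)) hs
  have hb := mul_le_mul_of_nonneg_right ((min_le_left (min a b) c).trans (min_le_right a b)) ht
  have hc := mul_le_mul_of_nonneg_right (min_le_right (min a b) c) hu
  linarith

theorem stmt13_general (R₀ : Matrix (Fin 3) (Fin 3) ℝ)
    (hO : R₀ᵀ * R₀ = 1)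
    (ρ g vmax ε : ℝ) (m : Fin 3 → ℝ)
    (hρ : 0 < ρ) (hR33 : |R₀ 2 2| ≥ ρ) (hg : 0 < g)
    (hnc : m 0 ^ 2 + m 1 ^ 2 > 0)
    (hvmax : 0 < vmax)
    (hε : 0 < ε) (hεsmall : ε < g ^ 2 * ρ ^ 2 / (2 * vmax ^ 2)) :
    0 < min (min (g ^ 2 * ρ ^ 2 / 2 - ε * vmax ^ 2)
              ((m 0 ^ 2 + m 1 ^ 2) * g ^ 2 * ρ ^ 2 / (2 * m 2 ^ 2 + g ^ 2 * ρ ^ 2)))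
            (ε * ρ ^ 2 / (3 * (1 + ε))) ∧
    ∀ (x y : Fin 3 → ℝ) (t : ℝ),
      sq3 (crossProduct m x) + g ^ 2 * sq3 ((skew (R₀.mulVec e3) * skew e3).mulVec x)
          - ε * vmax ^ 2 * (x 0 ^ 2 + x 1 ^ 2)
          + y 0 ^ 2 + y 1 ^ 2
          + (ε / (1 + ε)) *
              ((R₀ᵀ.mulVec e3) 0 * y 0 + (R₀ᵀ.mulVec e3) 1 * y 1
                + (R₀ᵀ.mulVec e3) 2 * y 2) ^ 2 ≥
        min (min (g ^ 2 * ρ ^ 2 / 2 - ε * vmax ^ 2)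
              ((m 0 ^ 2 + m 1 ^ 2) * g ^ 2 * ρ ^ 2 / (2 * m 2 ^ 2 + g ^ 2 * ρ ^ 2)))
            (ε * ρ ^ 2 / (3 * (1 + ε))) * (sq3 x + sq3 y) := by
  have hρ33 : ρ ^ 2 ≤ R₀ 2 2 ^ 2 := sq_abs (R₀ 2 2) ▸ pow_le_pow_left₀ hρ.le hR33 2
  have hA : 0 < g ^ 2 * ρ ^ 2 / 2 - ε * vmax ^ 2 := by
    have := (lt_div_iff₀ (by positivity)).mp hεsmall
    linarith
  have hB : 0 < (m 0 ^ 2 + m 1 ^ 2) * g ^ 2 * ρ ^ 2 / (2 * m 2 ^ 2 + g ^ 2 * ρ ^ 2) :=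
    div_pos (by positivity) (by positivity)
  refine ⟨lt_min (lt_min hA hB) (by positivity), fun x y _ => ?_⟩
  have hrow : sq3 (R₀ᵀ *ᵥ e3) = 1 := by
    rw [sq3_mulVec_of_transpose_mul_self (by simpa using mul_eq_one_comm.mp hO), sq3_e3]
  have hy := mul_sq3_le_sq_add_sq_add_mul_sq_dotProduct (ρ := ρ) hε.le hrow
    (by rwa [mulVec_e3_apply, transpose_apply]) y
  have hcross : (m 0 ^ 2 + m 1 ^ 2) * g ^ 2 * ρ ^ 2 / (2 * m 2 ^ 2 + g ^ 2 * ρ ^ 2) * x 2 ^ 2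
      ≤ sq3 (m ⨯₃ x) + g ^ 2 * ρ ^ 2 / 2 * (x 0 ^ 2 + x 1 ^ 2) := by
    simpa only [mul_assoc] using mul_sq_two_le_sq3_cross_add (by positivity : 0 < g ^ 2 * ρ ^ 2) m x
  have hskew : g ^ 2 * ρ ^ 2 * (x 0 ^ 2 + x 1 ^ 2)
      ≤ g ^ 2 * sq3 ((skew (R₀ *ᵥ e3) * skew e3) *ᵥ x) := by
    rw [mul_assoc]
    gcongr
    calc ρ ^ 2 * (x 0 ^ 2 + x 1 ^ 2) ≤ R₀ 2 2 ^ 2 * (x 0 ^ 2 + x 1 ^ 2) := by gcongr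
      _ ≤ _ := mulVec_e3_apply R₀ 2 ▸ sq_two_mul_le_sq3_skew_mul_skew_e3_mulVec _ x
  calc _ = _ * ((x 0 ^ 2 + x 1 ^ 2) + x 2 ^ 2 + sq3 y) := by simp only [sq3]; ring
    _ ≤ _ := min_min_mul_add_add_le (by positivity) (sq_nonneg _) (by simp only [sq3]; positivity)
    _ ≤ _ := by linarith

/-- Pure-translation case of the instantaneous observability lemma: with `Ω ≡ 0`,
constant attitude `R(t) ≡ R₀ ∈ SO(3)` with `|(R₀)₃₃| ≥ ρ > 0`, `|v(t)| ≤ v_max`,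
`m ∈ S²` not collinear with `e₃`, and `0 < ε < g²ρ²/(2v_max²)`, the quadratic form
is bounded below by `μ(|x|² + |y|²)` with the indicated `μ > 0`. -/
theorem stmt13 (R₀ : Matrix (Fin 3) (Fin 3) ℝ)
    (hO : R₀ᵀ * R₀ = 1) (hdet : R₀.det = 1)
    (ρ g vmax ε : ℝ) (m : Fin 3 → ℝ)
    (hρ : 0 < ρ) (hR33 : |R₀ 2 2| ≥ ρ) (hg : 0 < g)
    (hm : m 0 ^ 2 + m 1 ^ 2 + m 2 ^ 2 = 1) (hnc : m 0 ^ 2 + m 1 ^ 2 > 0)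
    (hvmax : 0 < vmax)
    (hε : 0 < ε) (hεsmall : ε < g ^ 2 * ρ ^ 2 / (2 * vmax ^ 2))
    (Ω : ℝ → Fin 3 → ℝ) (hΩ : ∀ t : ℝ, Ω t = 0)
    (R : ℝ → Matrix (Fin 3) (Fin 3) ℝ) (hR : ∀ t : ℝ, R t = R₀)
    (v : ℝ → Fin 3 → ℝ) (hv : ∀ t : ℝ, Real.sqrt (sq3 (v t)) ≤ vmax) :
    0 < min (min (g ^ 2 * ρ ^ 2 / 2 - ε * vmax ^ 2)
              ((m 0 ^ 2 + m 1 ^ 2) * g ^ 2 * ρ ^ 2 / (2 * m 2 ^ 2 + g ^ 2 * ρ ^ 2)))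
            (ε * ρ ^ 2 / (3 * (1 + ε))) ∧
    ∀ (x y : Fin 3 → ℝ) (t : ℝ),
      sq3 (crossProduct m x) + g ^ 2 * sq3 ((skew (R₀.mulVec e3) * skew e3).mulVec x)
          - ε * vmax ^ 2 * (x 0 ^ 2 + x 1 ^ 2)
          + y 0 ^ 2 + y 1 ^ 2
          + (ε / (1 + ε)) *
              ((R₀ᵀ.mulVec e3) 0 * y 0 + (R₀ᵀ.mulVec e3) 1 * y 1
                + (R₀ᵀ.mulVec e3) 2 * y 2) ^ 2 ≥
        min (min (g ^ 2 * ρ ^ 2 / 2 - ε * vmax ^ 2)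
              ((m 0 ^ 2 + m 1 ^ 2) * g ^ 2 * ρ ^ 2 / (2 * m 2 ^ 2 + g ^ 2 * ρ ^ 2)))
            (ε * ρ ^ 2 / (3 * (1 + ε))) * (sq3 x + sq3 y) :=
  stmt13_general R₀ hO ρ g vmax ε m hρ hR33 hg hnc hvmax hε hεsmall
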